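/- Let E be a Hilbert C*-module over a unital C*-algebra satisfying property [H], C ∈ K(E) compact, and L = I − C. Then the descending chain of ranges stabilizes: there exists s ∈ ℕ such that Ran(L^s) = Ran(L^{s+1}), and consequently Ran(L^n) = Ran(L^s) for all n ≥ s. -/

import Mathlib

open scoped RightActions
open CStarModule Filter Topology

/-- The class `CStarModule` as it stood in Mathlib of December 2024: a right Hilbert module
(`Aᵐᵒᵖ` acts on `E`), inner product linear in the second argument w.r.t. the right action. -/
class OldCStarModule (A : outParam <| Type*) (E : Type*) [NonUnitalSemiring A] [StarRing A]
    [Module ℂ A] [AddCommGroup E] [Module ℂ E] [PartialOrder A] [SMul Aᵐᵒᵖ E] [Norm A] [Norm E]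
    extends Inner A E where
  inner_add_right {x} {y} {z} : inner x (y + z) = inner x y + inner x z
  inner_self_nonneg {x} : 0 ≤ inner x x
  inner_self {x} : inner x x = 0 ↔ x = 0
  inner_op_smul_right {a : A} {x y : E} : inner x (y <• a) = inner x y * a
  inner_smul_right_complex {z : ℂ} {x} {y} : inner x (z • y) = z • inner x y
  star_inner x y : star (inner x y) = inner y x
  norm_eq_sqrt_norm_inner_self x : ‖x‖ = √‖inner x x‖

section
variable (A E : Type*) [CStarAlgebra A] [PartialOrder A] [StarOrderedRing A]
  [NormedAddCommGroup E] [NormedSpace ℂ E] [Module Aᵐᵒᵖ E] [OldCStarModule A E]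

/-- The rank-one operator predicate: `T = θ_{u,v}`, i.e. `T z = u⟪v, z⟫`. -/
def IsRankOne (T : E →L[ℂ] E) : Prop := ∃ u v : E, ∀ z, T z = u <• (inner (𝕜 := A) v z)

/-- The set `K(E)` of compact operators: the closure of the linear span of rank-one operators. -/
def compactOp : Set (E →L[ℂ] E) :=
  closure (Submodule.span ℂ {T : E →L[ℂ] E | IsRankOne A E T} : Set (E →L[ℂ] E))

/-- Property [H]: every bounded sequence has a weakly convergent subsequence. -/
def PropertyH : Prop :=
  ∀ ζ : ℕ → E, Bornology.IsBounded (Set.range ζ) →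
    ∃ φ : ℕ → ℕ, StrictMono φ ∧ ∃ z : E, ∀ v : E,
      Tendsto (fun k => inner (𝕜 := A) v (ζ (φ k))) atTop (nhds (inner (𝕜 := A) v z))

/-- Weak convergence of a sequence. -/
def WeakTo (ζ : ℕ → E) (z : E) : Prop :=
  ∀ v : E, Tendsto (fun n => inner (𝕜 := A) v (ζ n)) atTop (𝓝 (inner (𝕜 := A) v z))

/-- "Completely continuous": maps bounded weakly convergent sequences to norm convergent ones. -/
def CCop (C : E →L[ℂ] E) : Prop :=
  ∀ (ζ : ℕ → E) (z : E) (M : ℝ), (∀ n, ‖ζ n‖ ≤ M) → WeakTo A E ζ z →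
    Tendsto (fun n => C (ζ n)) atTop (𝓝 (C z))

variable {A E}

lemma old_norm_sq_eq {x : E} : ‖x‖ ^ 2 = ‖inner (𝕜 := A) x x‖ := by
  rw [OldCStarModule.norm_eq_sqrt_norm_inner_self (A := A) x, Real.sq_sqrt (norm_nonneg _)]

lemma old_inner_op_smul_left {a : A} {x y : E} :
    inner (𝕜 := A) (x <• a) y = star a * inner (𝕜 := A) x y := by
  rw [← OldCStarModule.star_inner y, OldCStarModule.inner_op_smul_right, star_mul,
    OldCStarModule.star_inner]

lemma old_inner_sub_right {x y z : E} :
    inner (𝕜 := A) x (y - z) = inner (𝕜 := A) x y - inner (𝕜 := A) x z := by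
  have h := OldCStarModule.inner_add_right (A := A) (x := x) (y := y - z) (z := z)
  rw [sub_add_cancel] at h
  exact eq_sub_of_add_eq h.symm

lemma old_inner_sub_left {x y z : E} :
    inner (𝕜 := A) (x - y) z = inner (𝕜 := A) x z - inner (𝕜 := A) y z := by
  rw [← OldCStarModule.star_inner z, old_inner_sub_right, star_sub,
    OldCStarModule.star_inner, OldCStarModule.star_inner]

lemma old_inner_zero_right {x : E} : inner (𝕜 := A) x (0 : E) = 0 := by
  have h := old_inner_sub_right (A := A) (x := x) (y := 0) (z := 0)
  rwa [sub_self, sub_self] at h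

lemma old_inner_zero_left {x : E} : inner (𝕜 := A) (0 : E) x = 0 := by
  rw [← OldCStarModule.star_inner x, old_inner_zero_right, star_zero]

lemma old_inner_smul_right_real {r : ℝ} {x y : E} :
    inner (𝕜 := A) x (r • y) = r • inner (𝕜 := A) x y := by
  have h₁ : r • y = (r : ℂ) • y := by simp
  rw [h₁, OldCStarModule.inner_smul_right_complex]
  simp

lemma old_inner_smul_left_real {r : ℝ} {x y : E} :
    inner (𝕜 := A) (r • x) y = r • inner (𝕜 := A) x y := by
  rw [← OldCStarModule.star_inner y, old_inner_smul_right_real, star_smul,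
    OldCStarModule.star_inner]
  simp

lemma old_inner_swap_mul_le {x y : E} :
    inner (𝕜 := A) y x * inner (𝕜 := A) x y ≤ ‖x‖ ^ 2 • inner (𝕜 := A) y y := by
  rcases eq_or_ne x 0 with h | h
  · subst h; simp [old_inner_zero_left, old_inner_zero_right]
  · have h₁ : ∀ a : A, (0 : A) ≤ ‖x‖ ^ 2 • (star a * a) - ‖x‖ ^ 2 • (star a * inner (𝕜 := A) x y)
        - ‖x‖ ^ 2 • (inner (𝕜 := A) y x * a) + ‖x‖ ^ 2 • (‖x‖ ^ 2 • inner (𝕜 := A) y y) :=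
        fun a => by
      calc (0 : A) ≤ inner (𝕜 := A) (x <• a - ‖x‖ ^ 2 • y) (x <• a - ‖x‖ ^ 2 • y) :=
              OldCStarModule.inner_self_nonneg
        _ = star a * inner (𝕜 := A) x x * a - ‖x‖ ^ 2 • (star a * inner (𝕜 := A) x y)
              - ‖x‖ ^ 2 • (inner (𝕜 := A) y x * a)
              + ‖x‖ ^ 2 • (‖x‖ ^ 2 • inner (𝕜 := A) y y) := by
            simp only [old_inner_sub_right, old_inner_sub_left, old_inner_op_smul_left,
              OldCStarModule.inner_op_smul_right, old_inner_smul_left_real,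
              old_inner_smul_right_real, mul_assoc]
            simp only [sub_mul, mul_sub, smul_mul_assoc, mul_smul_comm, smul_sub, mul_assoc]
            abel
        _ ≤ ‖x‖ ^ 2 • (star a * a) - ‖x‖ ^ 2 • (star a * inner (𝕜 := A) x y)
              - ‖x‖ ^ 2 • (inner (𝕜 := A) y x * a)
              + ‖x‖ ^ 2 • (‖x‖ ^ 2 • inner (𝕜 := A) y y) := by
            gcongr
            calc _ ≤ ‖inner (𝕜 := A) x x‖ • (star a * a) :=
                CStarAlgebra.star_left_conjugate_le_norm_smul (hb := OldCStarModule.star_inner x x)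
              _ = ‖x‖ ^ 2 • (star a * a) := by rw [old_norm_sq_eq]
    specialize h₁ (inner (𝕜 := A) x y)
    simp only [OldCStarModule.star_inner, sub_self, zero_sub, le_neg_add_iff_add_le,
      add_zero] at h₁
    rwa [smul_le_smul_iff_of_pos_left (pow_pos (norm_pos_iff.mpr h) _)] at h₁

variable (E) in
lemma old_norm_inner_le {x y : E} : ‖inner (𝕜 := A) x y‖ ≤ ‖x‖ * ‖y‖ := by
  have := calc ‖inner (𝕜 := A) x y‖ ^ 2 = ‖inner (𝕜 := A) y x * inner (𝕜 := A) x y‖ := by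
                rw [← OldCStarModule.star_inner x y, CStarRing.norm_star_mul_self, pow_two]
    _ ≤ ‖‖x‖ ^ 2 • inner (𝕜 := A) y y‖ := by
                refine CStarAlgebra.norm_le_norm_of_nonneg_of_le ?_ old_inner_swap_mul_le
                rw [← OldCStarModule.star_inner x y]
                exact star_mul_self_nonneg _
    _ = ‖x‖ ^ 2 * ‖inner (𝕜 := A) y y‖ := by simp [norm_smul]
    _ = ‖x‖ ^ 2 * ‖y‖ ^ 2 := by rw [old_norm_sq_eq (x := y)]
    _ = (‖x‖ * ‖y‖) ^ 2 := by rw [mul_pow]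
  exact (pow_le_pow_iff_left₀ (norm_nonneg _) (by positivity) (by simp)).mp this

lemma norm_op_smul_le (x : E) (a : A) : ‖x <• a‖ ≤ ‖x‖ * ‖a‖ := by
  have h1 : ‖x <• a‖ ^ 2 = ‖inner (𝕜 := A) (x <• a) (x <• a)‖ := old_norm_sq_eq
  have h2 : inner (𝕜 := A) (x <• a) (x <• a) = star a * (inner (𝕜 := A) x x * a) := by
    rw [old_inner_op_smul_left, OldCStarModule.inner_op_smul_right]
  have h3 : ‖star a * (inner (𝕜 := A) x x * a)‖ ≤ ‖a‖ * (‖inner (𝕜 := A) x x‖ * ‖a‖) := by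
    calc ‖star a * (inner (𝕜 := A) x x * a)‖ ≤ ‖star a‖ * ‖inner (𝕜 := A) x x * a‖ :=
          norm_mul_le _ _
      _ ≤ ‖star a‖ * (‖inner (𝕜 := A) x x‖ * ‖a‖) := by
          gcongr; exact norm_mul_le _ _
      _ = ‖a‖ * (‖inner (𝕜 := A) x x‖ * ‖a‖) := by rw [norm_star]
  have h4 : ‖inner (𝕜 := A) x x‖ = ‖x‖ ^ 2 := (old_norm_sq_eq (E := E)).symm
  have h5 : ‖x <• a‖ ^ 2 ≤ (‖x‖ * ‖a‖) ^ 2 := by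
    rw [h1, h2]; calc _ ≤ ‖a‖ * (‖inner (𝕜 := A) x x‖ * ‖a‖) := h3
      _ = (‖x‖ * ‖a‖) ^ 2 := by rw [h4]; ring
  exact (pow_le_pow_iff_left₀ (norm_nonneg _) (by positivity) two_ne_zero).mp h5

lemma tendsto_op_smul {a : ℕ → A} {b : A} (x : E) (h : Tendsto a atTop (𝓝 b)) :
    Tendsto (fun n => x <• (a n)) atTop (𝓝 (x <• b)) := by
  rw [tendsto_iff_norm_sub_tendsto_zero] at h ⊢
  apply squeeze_zero (fun n => norm_nonneg _) (g := fun n => ‖x‖ * ‖a n - b‖)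
  · intro n
    have : x <• (a n) - x <• b = x <• (a n - b) := by
      show MulOpposite.op (a n) • x - MulOpposite.op b • x = MulOpposite.op (a n - b) • x
      rw [MulOpposite.op_sub, sub_smul]
    rw [this]
    exact norm_op_smul_le x _
  · simpa using h.const_mul ‖x‖

lemma norm_le_of_weakTo {ζ : ℕ → E} {z : E} {M : ℝ} (hM : ∀ n, ‖ζ n‖ ≤ M)
    (hw : WeakTo A E ζ z) : ‖z‖ ≤ M := by
  have hM0 : 0 ≤ M := le_trans (norm_nonneg _) (hM 0)
  have h := (hw z).norm
  have hle : ∀ n, ‖inner (𝕜 := A) z (ζ n)‖ ≤ ‖z‖ * M := fun n =>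
    le_trans (old_norm_inner_le E) (by gcongr; exact hM n)
  have h2 : ‖inner (𝕜 := A) z z‖ ≤ ‖z‖ * M := le_of_tendsto h (Eventually.of_forall hle)
  have h3 : ‖z‖ ^ 2 ≤ ‖z‖ * M := by rw [old_norm_sq_eq]; exact h2
  rcases eq_or_lt_of_le (norm_nonneg z) with h0 | h0
  · rw [← h0]; exact hM0
  · nlinarith

lemma ccop_of_mem_compactOp {C : E →L[ℂ] E} (hC : C ∈ compactOp A E) : CCop A E C := by
  intro ζ z M hM hw
  have hM0 : 0 ≤ M := le_trans (norm_nonneg _) (hM 0)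
  have hz : ‖z‖ ≤ M := norm_le_of_weakTo hM hw
  have hspan : ∀ T ∈ Submodule.span ℂ {T : E →L[ℂ] E | IsRankOne A E T},
      Tendsto (fun n => T (ζ n)) atTop (𝓝 (T z)) := by
    intro T hT
    induction hT using Submodule.span_induction with
    | mem T hT =>
        obtain ⟨u, v, hT⟩ := hT
        simp only [hT]
        exact tendsto_op_smul u (hw v)
    | zero => simp only [ContinuousLinearMap.zero_apply]; exact tendsto_const_nhds
    | add T S _ _ hT hS =>
        simp only [ContinuousLinearMap.add_apply]; exact hT.add hS
    | smul c T _ hT =>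
        simp only [ContinuousLinearMap.smul_apply]; exact hT.const_smul c
  rw [Metric.tendsto_atTop]
  intro ε hε
  obtain ⟨T, hTmem, hTd⟩ := Metric.mem_closure_iff.mp hC (ε / (3 * (M + 1))) (by positivity)
  obtain ⟨N, hN⟩ := Metric.tendsto_atTop.mp (hspan T hTmem) (ε / 3) (by positivity)
  refine ⟨N, fun n hn => ?_⟩
  have hd : ∀ x : E, ‖x‖ ≤ M → ‖C x - T x‖ ≤ ε / 3 := by
    intro x hx
    have h1 : ‖C x - T x‖ = ‖(C - T) x‖ := by rw [ContinuousLinearMap.sub_apply]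
    have h2 : ‖(C - T) x‖ ≤ ‖C - T‖ * ‖x‖ := (C - T).le_opNorm x
    have h3 : ‖C - T‖ < ε / (3 * (M + 1)) := by rwa [← dist_eq_norm]
    have h4 : ‖C - T‖ * ‖x‖ ≤ (ε / (3 * (M + 1))) * M :=
      mul_le_mul h3.le hx (norm_nonneg _) (by positivity)
    have h5 : (ε / (3 * (M + 1))) * M ≤ ε / 3 := by
      rw [div_mul_eq_mul_div, div_le_div_iff₀ (by positivity) (by positivity)]
      nlinarith
    linarith [h1 ▸ le_trans h2 (le_trans h4 h5)]
  calc dist (C (ζ n)) (C z)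
      ≤ dist (C (ζ n)) (T (ζ n)) + dist (T (ζ n)) (T z) + dist (T z) (C z) :=
        dist_triangle4 _ _ _ _
    _ < ε / 3 + ε / 3 + ε / 3 := by
        have e1 : dist (C (ζ n)) (T (ζ n)) ≤ ε / 3 := by
          rw [dist_eq_norm]; exact hd _ (hM n)
        have e2 : dist (T (ζ n)) (T z) < ε / 3 := hN n hn
        have e3 : dist (T z) (C z) ≤ ε / 3 := by
          rw [dist_eq_norm, norm_sub_rev]; exact hd _ hz
        linarith
    _ = ε := by ring

lemma ccop_add {C D : E →L[ℂ] E} (hC : CCop A E C) (hD : CCop A E D) : CCop A E (C + D) := by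
  intro ζ z M hM hw
  simp only [ContinuousLinearMap.add_apply]
  exact (hC ζ z M hM hw).add (hD ζ z M hM hw)

lemma ccop_neg {C : E →L[ℂ] E} (hC : CCop A E C) : CCop A E (-C) := by
  intro ζ z M hM hw
  simp only [ContinuousLinearMap.neg_apply]
  exact (hC ζ z M hM hw).neg

lemma ccop_mul_left (D : E →L[ℂ] E) {C : E →L[ℂ] E} (hC : CCop A E C) : CCop A E (D * C) := by
  intro ζ z M hM hw
  simp only [ContinuousLinearMap.mul_apply]
  exact (D.continuous.tendsto (C z)).comp (hC ζ z M hM hw)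

lemma ccop_pow_one_sub {C : E →L[ℂ] E} (hC : CCop A E C) (n : ℕ) :
    ∃ D : E →L[ℂ] E, CCop A E D ∧ (1 - C) ^ n = 1 - D := by
  induction n with
  | zero =>
      refine ⟨0, ?_, by simp⟩
      intro ζ z M hM hw
      simp only [ContinuousLinearMap.zero_apply]
      exact tendsto_const_nhds
  | succ n ih =>
      obtain ⟨D, hD, hEq⟩ := ih
      refine ⟨C + D - D * C, ?_, ?_⟩
      · have : C + D - D * C = C + D + -(D * C) := by noncomm_ring
        rw [this]
        exact ccop_add (ccop_add hC hD) (ccop_neg (ccop_mul_left D hC))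
      · rw [pow_succ, hEq]
        noncomm_ring

lemma riesz_point (F : Submodule ℝ E) {p q : E} {d : ℝ} (hd : 0 < d) (hq : q ∈ F)
    (h2 : ‖p - q‖ < 2 * d) (hdle : ∀ w ∈ F, d ≤ ‖p - w‖) :
    ∀ w ∈ F, 1 / 2 ≤ ‖‖p - q‖⁻¹ • (p - q) - w‖ := by
  intro w hw
  set r : ℝ := ‖p - q‖ with hrdef
  have hr : 0 < r := lt_of_lt_of_le hd (hdle q hq)
  have hv : q + r • w ∈ F := F.add_mem hq (F.smul_mem r hw)
  have key : r⁻¹ • (p - q) - w = r⁻¹ • (p - (q + r • w)) := by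
    rw [sub_add_eq_sub_sub, smul_sub r⁻¹ (p - q) (r • w), smul_smul,
      inv_mul_cancel₀ hr.ne', one_smul]
  rw [key, norm_smul, Real.norm_eq_abs, abs_of_pos (inv_pos.mpr hr)]
  calc (1 : ℝ) / 2 ≤ d / r := by
        rw [le_div_iff₀ hr]; linarith
    _ = r⁻¹ * d := by rw [div_eq_inv_mul]
    _ ≤ r⁻¹ * ‖p - (q + r • w)‖ := by
        gcongr
        exact hdle _ hv

lemma isClosed_range_one_sub [CompleteSpace E] (hH : PropertyH A E) {C : E →L[ℂ] E}
    (hCC : CCop A E C) : IsClosed (Set.range ⇑(1 - C)) := by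
  set L : E →L[ℂ] E := 1 - C with hLdef
  have hCx : ∀ x : E, C x = x - L x := by
    intro x
    simp [hLdef, ContinuousLinearMap.sub_apply]
  have hLCx : ∀ x : E, L x + C x = x := by intro x; rw [hCx]; abel
  set K : Submodule ℝ E := (LinearMap.ker (L : E →ₗ[ℂ] E)).restrictScalars ℝ with hKdef
  have hKmem : ∀ x : E, x ∈ K ↔ L x = 0 := fun x => Iff.rfl
  have hKne : ((K : Set E)).Nonempty := ⟨0, by simp [hKmem]⟩
  -- Step 1: a priori bound
  have key : ∃ c : ℝ, ∀ x : E, Metric.infDist x (K : Set E) ≤ c * ‖L x‖ := by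
    by_contra hcon
    push_neg at hcon
    choose x hx using fun j : ℕ => hcon (j + 1)
    set d : ℕ → ℝ := fun j => Metric.infDist (x j) (K : Set E) with hddef
    have hd_pos : ∀ j, 0 < d j := fun j => lt_of_le_of_lt (by positivity) (hx j)
    have hq : ∀ j, ∃ q ∈ (K : Set E), dist (x j) q < 2 * d j := by
      intro j
      exact (Metric.infDist_lt_iff hKne).mp (by linarith [hd_pos j])
    choose q hqK hqd using hq
    have hdle : ∀ j, ∀ w ∈ K, d j ≤ ‖x j - w‖ := by
      intro j w hw
      rw [← dist_eq_norm]
      exact Metric.infDist_le_dist_of_mem hw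
    have hr_pos : ∀ j, 0 < ‖x j - q j‖ := fun j => lt_of_lt_of_le (hd_pos j) (hdle j _ (hqK j))
    set u : ℕ → E := fun j => ‖x j - q j‖⁻¹ • (x j - q j) with hudef
    have hu_norm : ∀ j, ‖u j‖ = 1 := by
      intro j
      rw [hudef]
      simp only [norm_smul, Real.norm_eq_abs, abs_of_pos (inv_pos.mpr (hr_pos j))]
      exact inv_mul_cancel₀ (hr_pos j).ne'
    have hu_far : ∀ j, ∀ w ∈ K, 1 / 2 ≤ ‖u j - w‖ := by
      intro j
      refine riesz_point K (hd_pos j) (hqK j) ?_ (hdle j)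
      rw [← dist_eq_norm]; exact hqd j
    have hLu : Tendsto (fun j => L (u j)) atTop (𝓝 0) := by
      rw [tendsto_iff_norm_sub_tendsto_zero]
      apply squeeze_zero (fun j => by simp [norm_nonneg]) (g := fun j : ℕ => 1 / (j + 1))
      · intro j
        have h1 : L (u j) = ‖x j - q j‖⁻¹ • (L (x j)) := by
          rw [hudef]
          have : L (x j - q j) = L (x j) := by
            have := (hKmem (q j)).mp (hqK j)
            rw [map_sub, this, sub_zero]
          rw [L.map_smul_of_tower, this]
        rw [sub_zero, h1, norm_smul, Real.norm_eq_abs, abs_of_pos (inv_pos.mpr (hr_pos j))]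
        have h2 : ‖L (x j)‖ < d j / (j + 1) := by
          rw [lt_div_iff₀ (by positivity)]
          calc ‖L (x j)‖ * (j + 1) = (j + 1 : ℝ) * ‖L (x j)‖ := by ring
            _ < d j := hx j
        have h3 : ‖x j - q j‖⁻¹ ≤ (d j)⁻¹ := by
          apply inv_anti₀ (hd_pos j)
          exact hdle j _ (hqK j)
        calc ‖x j - q j‖⁻¹ * ‖L (x j)‖ ≤ (d j)⁻¹ * (d j / (j + 1)) :=
              mul_le_mul h3 h2.le (norm_nonneg _) (inv_nonneg.mpr (hd_pos j).le)
            _ = 1 / (j + 1) := by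
              rw [div_eq_mul_one_div, ← mul_assoc, inv_mul_cancel₀ (hd_pos j).ne', one_mul]
      · exact tendsto_one_div_add_atTop_nhds_zero_nat
    obtain ⟨φ, hφ, w, hwweak⟩ := hH u (by
      rw [isBounded_iff_forall_norm_le]
      exact ⟨1, by rintro y ⟨j, rfl⟩; rw [hu_norm j]⟩)
    have hCu : Tendsto (fun k => C (u (φ k))) atTop (𝓝 (C w)) :=
      hCC (fun k => u (φ k)) w 1 (fun k => (hu_norm (φ k)).le) hwweak
    have hconv : Tendsto (fun k => u (φ k)) atTop (𝓝 (0 + C w)) := by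
      have heq : (fun k => u (φ k)) = fun k => L (u (φ k)) + C (u (φ k)) := by
        funext k; rw [hLCx]
      rw [heq]
      exact ((hLu.comp hφ.tendsto_atTop)).add hCu
    rw [zero_add] at hconv
    have hwK : C w ∈ K := by
      rw [hKmem]
      have h1 : Tendsto (fun k => L (u (φ k))) atTop (𝓝 (L (C w))) :=
        (L.continuous.tendsto (C w)).comp hconv
      exact tendsto_nhds_unique h1 (hLu.comp hφ.tendsto_atTop)
    have : Tendsto (fun k => ‖u (φ k) - C w‖) atTop (𝓝 0) := by
      rw [← tendsto_iff_norm_sub_tendsto_zero]; exact hconv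
    obtain ⟨k, hk⟩ := (Metric.tendsto_atTop.mp this (1 / 2) (by norm_num)) |>.imp (fun k h => h k le_rfl)
    have := hu_far (φ k) (C w) hwK
    rw [Real.dist_eq, sub_zero, abs_of_nonneg (norm_nonneg _)] at hk
    linarith
  -- Step 2: closedness
  obtain ⟨c₀, hc₀⟩ := key
  set c : ℝ := max c₀ 0 with hcdef
  have hcnn : 0 ≤ c := le_max_right _ _
  have hc : ∀ x : E, Metric.infDist x (K : Set E) ≤ c * ‖L x‖ := fun x =>
    le_trans (hc₀ x) (mul_le_mul_of_nonneg_right (le_max_left _ _) (norm_nonneg _))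
  rw [← isSeqClosed_iff_isClosed]
  intro ζ y hζ hy
  choose x hx using hζ
  obtain ⟨B, hB⟩ := BddAbove.exists_ge (hy.norm.bddAbove_range) 0
  have hBn : ∀ n, ‖ζ n‖ ≤ B := fun n => hB.2 ‖ζ n‖ ⟨n, rfl⟩
  have hq : ∀ n, ∃ k ∈ (K : Set E), dist (x n) k < c * B + 1 := by
    intro n
    apply (Metric.infDist_lt_iff hKne).mp
    calc Metric.infDist (x n) (K : Set E) ≤ c * ‖L (x n)‖ := hc (x n)
      _ = c * ‖ζ n‖ := by rw [hx n]
      _ < c * B + 1 := by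
          have := mul_le_mul_of_nonneg_left (hBn n) hcnn
          linarith
  choose k hkK hkd using hq
  set zz : ℕ → E := fun n => x n - k n with hzzdef
  have hLzz : ∀ n, L (zz n) = ζ n := by
    intro n
    rw [hzzdef]
    have hk0 : L (k n) = 0 := (hKmem (k n)).mp (hkK n)
    rw [map_sub, hk0, sub_zero, hx n]
  have hzzbd : ∀ n, ‖zz n‖ ≤ c * B + 1 := by
    intro n
    rw [hzzdef]
    have := hkd n
    rw [dist_eq_norm] at this
    exact this.le
  obtain ⟨φ, hφ, w, hwweak⟩ := hH zz (by
    rw [isBounded_iff_forall_norm_le]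
    exact ⟨c * B + 1, by rintro y' ⟨n, rfl⟩; exact hzzbd n⟩)
  have hCz : Tendsto (fun m => C (zz (φ m))) atTop (𝓝 (C w)) :=
    hCC (fun m => zz (φ m)) w (c * B + 1) (fun m => hzzbd (φ m)) hwweak
  have hLz : Tendsto (fun m => L (zz (φ m))) atTop (𝓝 y) := by
    have : (fun m => L (zz (φ m))) = fun m => ζ (φ m) := by funext m; rw [hLzz]
    rw [this]
    exact hy.comp hφ.tendsto_atTop
  have hconv : Tendsto (fun m => zz (φ m)) atTop (𝓝 (y + C w)) := by
    have heq : (fun m => zz (φ m)) = fun m => L (zz (φ m)) + C (zz (φ m)) := by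
      funext m; rw [hLCx]
    rw [heq]
    exact hLz.add hCz
  refine ⟨y + C w, ?_⟩
  have h1 : Tendsto (fun m => L (zz (φ m))) atTop (𝓝 (L (y + C w))) :=
    (L.continuous.tendsto (y + C w)).comp hconv
  exact tendsto_nhds_unique h1 hLz

/-- the descending chain of ranges of powers of `L = I − C` stabilizes. -/
theorem stmt9 [CompleteSpace E] (hH : PropertyH A E) (C : E →L[ℂ] E) (hC : C ∈ compactOp A E) :
    ∃ s : ℕ, Set.range ⇑((1 - C) ^ (s + 1)) = Set.range ⇑((1 - C) ^ s) ∧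
      ∀ n ≥ s, Set.range ⇑((1 - C) ^ n) = Set.range ⇑((1 - C) ^ s) := by
  have hCC : CCop A E C := ccop_of_mem_compactOp hC
  set L : E →L[ℂ] E := 1 - C with hLdef
  have hclosed : ∀ n : ℕ, IsClosed (Set.range ⇑(L ^ n)) := by
    intro n
    obtain ⟨D, hD, hEq⟩ := ccop_pow_one_sub hCC n
    rw [hLdef, hEq]
    exact isClosed_range_one_sub hH hD
  have hmul : ∀ (m n : ℕ) (a : E), (L ^ (m + n)) a = (L ^ m) ((L ^ n) a) := by
    intro m n a
    rw [pow_add, ContinuousLinearMap.mul_apply]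
  have hmono : ∀ {m n : ℕ}, n ≤ m → Set.range ⇑(L ^ m) ⊆ Set.range ⇑(L ^ n) := by
    intro m n h y hy
    obtain ⟨a, ha⟩ := hy
    refine ⟨(L ^ (m - n)) a, ?_⟩
    rw [← hmul, Nat.add_sub_cancel' h]
    exact ha
  set F : ℕ → Submodule ℝ E := fun n => (LinearMap.range ((L ^ n : E →L[ℂ] E) : E →ₗ[ℂ] E)).restrictScalars ℝ with hFdef
  have hFmem : ∀ (n : ℕ) (x : E), x ∈ F n ↔ x ∈ Set.range ⇑(L ^ n) := fun n x => Iff.rfl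
  have hFset : ∀ n : ℕ, ((F n : Submodule ℝ E) : Set E) = Set.range ⇑(L ^ n) := fun n => rfl
  have hf : ∀ k : ℕ, Set.range ⇑(L ^ (k + 1)) = ⇑L '' Set.range ⇑(L ^ k) := by
    intro k
    rw [pow_succ']
    have hcomp : ⇑(L * L ^ k) = ⇑L ∘ ⇑(L ^ k) := rfl
    rw [hcomp, Set.range_comp]
  have main : ∃ s : ℕ, Set.range ⇑(L ^ (s + 1)) = Set.range ⇑(L ^ s) := by
    by_contra hne
    push_neg at hne
    have hx : ∀ n : ℕ, ∃ x : E, x ∈ Set.range ⇑(L ^ n) ∧ ‖x‖ = 1 ∧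
        ∀ w ∈ Set.range ⇑(L ^ (n + 1)), 1 / 2 ≤ ‖x - w‖ := by
      intro n
      have hssub : Set.range ⇑(L ^ (n + 1)) ⊆ Set.range ⇑(L ^ n) := hmono (Nat.le_succ n)
      have hex : ∃ p, p ∈ Set.range ⇑(L ^ n) ∧ p ∉ Set.range ⇑(L ^ (n + 1)) := by
        by_contra h'
        push_neg at h'
        exact hne n (Set.Subset.antisymm hssub h')
      obtain ⟨p, hp, hpn⟩ := hex
      have hSne : (Set.range ⇑(L ^ (n + 1))).Nonempty := ⟨0, 0, map_zero _⟩
      have hdpos : 0 < Metric.infDist p (Set.range ⇑(L ^ (n + 1))) :=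
        ((hclosed (n + 1)).notMem_iff_infDist_pos hSne).mp hpn
      set d : ℝ := Metric.infDist p (Set.range ⇑(L ^ (n + 1))) with hddef
      obtain ⟨q, hqS, hqd⟩ := (Metric.infDist_lt_iff hSne).mp
        (show d < 2 * d by linarith)
      have hdle : ∀ w ∈ F (n + 1), d ≤ ‖p - w‖ := by
        intro w hw
        rw [← dist_eq_norm]
        exact Metric.infDist_le_dist_of_mem ((hFmem (n + 1) w).mp hw)
      have hrpos : 0 < ‖p - q‖ := by
        have := Metric.infDist_le_dist_of_mem (x := p) hqS
        rw [dist_eq_norm] at this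
        exact lt_of_lt_of_le hdpos this
      refine ⟨‖p - q‖⁻¹ • (p - q), ?_, ?_, ?_⟩
      · obtain ⟨a, ha⟩ := hp
        obtain ⟨b, hb⟩ := hssub hqS
        exact ⟨‖p - q‖⁻¹ • (a - b), by rw [(L ^ n).map_smul_of_tower, map_sub, ha, hb]⟩
      · rw [norm_smul, Real.norm_eq_abs, abs_of_pos (inv_pos.mpr hrpos)]
        exact inv_mul_cancel₀ hrpos.ne'
      · intro w hw
        exact riesz_point (F (n + 1)) hdpos ((hFmem (n + 1) q).mpr hqS)
          (by rw [← dist_eq_norm]; exact hqd) hdle w ((hFmem (n + 1) w).mpr hw)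
    choose x hxmem hxnorm hxfar using hx
    have hCeq : ∀ v : E, C v = v - L v := by
      intro v
      simp [hLdef, ContinuousLinearMap.sub_apply]
    have hsep : ∀ m n : ℕ, n < m → 1 / 2 ≤ ‖C (x n) - C (x m)‖ := by
      intro m n hnm
      have heq : C (x n) - C (x m) = x n - (L (x n) + x m - L (x m)) := by
        rw [hCeq, hCeq]; abel
      rw [heq]
      apply hxfar n
      have h1 : L (x n) ∈ Set.range ⇑(L ^ (n + 1)) := by
        obtain ⟨a, ha⟩ := hxmem n
        exact ⟨a, by rw [pow_succ', ContinuousLinearMap.mul_apply, ha]⟩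
      have h2 : x m ∈ Set.range ⇑(L ^ (n + 1)) := hmono hnm (hxmem m)
      have h3 : L (x m) ∈ Set.range ⇑(L ^ (n + 1)) := by
        have hm1 : L (x m) ∈ Set.range ⇑(L ^ (m + 1)) := by
          obtain ⟨a, ha⟩ := hxmem m
          exact ⟨a, by rw [pow_succ', ContinuousLinearMap.mul_apply, ha]⟩
        exact hmono (Nat.succ_le_succ hnm.le) hm1
      have := (F (n + 1)).sub_mem
        ((F (n + 1)).add_mem ((hFmem _ _).mpr h1) ((hFmem _ _).mpr h2))
        ((hFmem _ _).mpr h3)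
      exact (hFmem _ _).mp this
    obtain ⟨φ, hφ, z, hweak⟩ := hH x (by
      rw [isBounded_iff_forall_norm_le]
      exact ⟨1, by rintro y ⟨n, rfl⟩; rw [hxnorm n]⟩)
    have hten := hCC (fun m => x (φ m)) z 1 (fun m => (hxnorm (φ m)).le) hweak
    obtain ⟨N, hN⟩ := Metric.cauchySeq_iff.mp hten.cauchySeq (1 / 2) (by norm_num)
    have h1 := hN N le_rfl (N + 1) (Nat.le_succ N)
    have h2 := hsep (φ (N + 1)) (φ N) (hφ (Nat.lt_succ_self N))
    rw [dist_eq_norm] at h1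
    linarith
  obtain ⟨s, hs⟩ := main
  refine ⟨s, hs, ?_⟩
  intro n hn
  induction n, hn using Nat.le_induction with
  | base => rfl
  | succ n hn ih => rw [hf n, ih, ← hf s, hs]

end
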